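/- (Satisfaction of AB̄N formulas is history-independent.) Let M be the model of an interpreted system with regular labelling and φ an EHS⁺_{AB̄N} formula (an EHS⁺ formula whose modalities are all among K_i, C_Γ, ⟨A⟩, ⟨B̄⟩, ⟨N⟩). For all intervals I, I' of M with g(I) = g(I'): M,I ⊨ φ if and only if M,I' ⊨ φ. -/

import Mathlib

/-!
A state carries its whole history, but the `AB̄N` fragment only sees an interval `I` through the
word `g(I)`. For `∼_i` this is immediate, as it compares local states position by position. For
`⟨A⟩`, `⟨B̄⟩` and `⟨N⟩`, a witness `J` at `I` starts at a state whose last configuration is fixed by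
`g(I)`; since `t^G` depends only on configurations, the word `g(J)` can be replayed from the
corresponding state of `I'`, giving a witness `J'` at `I'` with `g(J') = g(J)`. Induction on the
formula concludes.
-/

/-- The Halpern-Shoham interval modalities. -/
inductive HSMod : Type where
  | A | Abar | B | Bbar | D | Dbar | E | Ebar | L | Lbar | N | Nbar | O | Obar
  deriving DecidableEq

/-- Formulas of the logic EHS⁺ over agents `0,…,m` and propositional variables `V`. -/
inductive EHSFormula (m : ℕ) (V : Type) : Type where
  | pt : EHSFormula m V
  | prop : V → EHSFormula m V
  | neg : EHSFormula m V → EHSFormula m V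
  | conj : EHSFormula m V → EHSFormula m V → EHSFormula m V
  | know : Fin (m + 1) → EHSFormula m V → EHSFormula m V
  | common : Finset (Fin (m + 1)) → EHSFormula m V → EHSFormula m V
  | dia : HSMod → EHSFormula m V → EHSFormula m V
  deriving DecidableEq

/-- An interpreted system with regular labelling over agents `0,…,m` (agent `0` is the
environment) and variables `Var`. -/
structure ISRL (m : ℕ) (Var : Type) where
  L : Fin (m + 1) → Type
  finL : ∀ i, Fintype (L i)
  l0 : ∀ i, L i
  ACT : Fin (m + 1) → Type
  finACT : ∀ i, Fintype (ACT i)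
  P : ∀ i, L i → Set (ACT i)
  T : ∀ i, L i → (∀ j, ACT j) → L i → Prop
  lab : Var → RegularExpression (∀ i, L i)

attribute [instance] ISRL.finL ISRL.finACT

namespace ISRL

variable {m : ℕ} {Var : Type}

/-- Global configurations. -/
abbrev G (IS : ISRL m Var) : Type := ∀ i, IS.L i

instance (IS : ISRL m Var) : Fintype IS.G := Pi.instFintype

/-- The initial global configuration. -/
def g0 (IS : ISRL m Var) : IS.G := IS.l0

/-- The global transition relation `t^G`. -/
def tG (IS : ISRL m Var) (g g' : IS.G) : Prop :=
  ∃ a : ∀ j, IS.ACT j, ∀ i, a i ∈ IS.P i (g i) ∧ IS.T i (g i) a (g' i)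

/-- A partial state: a nonempty `t^G`-chain of configurations. -/
def IsPState (IS : ISRL m Var) (w : List IS.G) : Prop :=
  w ≠ [] ∧ w.Chain' IS.tG

/-- A global state of the model: a partial state starting at the initial configuration. -/
def IsState (IS : ISRL m Var) (w : List IS.G) : Prop :=
  IS.IsPState w ∧ w.head? = some IS.g0

/-- `g(s)`: the actual configuration of a (partial) state, i.e. its last configuration. -/
def gOf (IS : ISRL m Var) (w : List IS.G) : IS.G := w.getLastD IS.g0

/-- The global transition relation `t` of the model: extension by exactly one configuration. -/
def step (IS : ISRL m Var) (w w' : List IS.G) : Prop := ∃ g : IS.G, w' = w ++ [g]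

/-- Epistemic indistinguishability of states for agent `i`. -/
def simS (IS : ISRL m Var) (i : Fin (m + 1)) (w w' : List IS.G) : Prop :=
  IS.gOf w i = IS.gOf w' i

/-- An interval of the model: a nonempty `t`-path of global states. -/
def IsInterval (IS : ISRL m Var) (l : List (List IS.G)) : Prop :=
  l ≠ [] ∧ (∀ w ∈ l, IS.IsState w) ∧ l.Chain' IS.step

/-- Intervals of the model of `IS`. -/
structure Interval (IS : ISRL m Var) : Type where
  seq : List (List IS.G)
  isInterval : IS.IsInterval seq

namespace Interval

variable {IS : ISRL m Var}

/-- `first(I)`. -/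
def first (I : Interval IS) : List IS.G := I.seq.headD []

/-- `last(I)`. -/
def last (I : Interval IS) : List IS.G := I.seq.getLastD []

/-- `I` is a point interval. -/
def isPt (I : Interval IS) : Prop := I.seq.length = 1

/-- `g(I)`, the word of configurations read along `I`. -/
def gword (I : Interval IS) : List IS.G := I.seq.map IS.gOf

end Interval

section rels

variable {IS : ISRL m Var}

def relA (I I' : Interval IS) : Prop := I'.first = I.last
def relB (I I' : Interval IS) : Prop :=
  ∃ J : List (List IS.G), J ≠ [] ∧ I.seq = I'.seq ++ J
def relD (I I' : Interval IS) : Prop :=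
  ∃ J K : List (List IS.G), J ≠ [] ∧ K ≠ [] ∧ I.seq = J ++ I'.seq ++ K
def relE (I I' : Interval IS) : Prop :=
  ∃ J : List (List IS.G), J ≠ [] ∧ I.seq = J ++ I'.seq
def relL (I I' : Interval IS) : Prop := Relation.TransGen IS.step I.last I'.first
def relN (I I' : Interval IS) : Prop := IS.step I.last I'.first
def relO (I I' : Interval IS) : Prop :=
  ∃ J K : List (List IS.G), J ≠ [] ∧ K ≠ [] ∧ I.seq ++ J = K ++ I'.seq ∧
    IS.IsInterval (I.seq ++ J)

end rels

/-- The Allen relations on intervals of the model of `IS`. -/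
def hsRel (IS : ISRL m Var) : HSMod → Interval IS → Interval IS → Prop
  | .A => fun I I' => relA I I'
  | .Abar => fun I I' => relA I' I
  | .B => fun I I' => relB I I'
  | .Bbar => fun I I' => relB I' I
  | .D => fun I I' => relD I I'
  | .Dbar => fun I I' => relD I' I
  | .E => fun I I' => relE I I'
  | .Ebar => fun I I' => relE I' I
  | .L => fun I I' => relL I I'
  | .Lbar => fun I I' => relL I' I
  | .N => fun I I' => relN I I'
  | .Nbar => fun I I' => relN I' I
  | .O => fun I I' => relO I I'
  | .Obar => fun I I' => relO I' I

/-- Epistemic indistinguishability of intervals for agent `i`. -/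
def simI (IS : ISRL m Var) (i : Fin (m + 1)) (I I' : Interval IS) : Prop :=
  List.Forall₂ (IS.simS i) I.seq I'.seq

/-- `∼_Γ`: the transitive closure of the union of the `∼_i`, `i ∈ Γ`. -/
def simC (IS : ISRL m Var) (Γ : Finset (Fin (m + 1))) : Interval IS → Interval IS → Prop :=
  Relation.TransGen (fun I I' => ∃ i ∈ Γ, IS.simI i I I')

/-- Satisfaction of EHS⁺ formulas at an interval, with respect to a labelling `lab`. -/
def Sat (IS : ISRL m Var) {W : Type} (lab : W → RegularExpression IS.G) :
    EHSFormula m W → Interval IS → Prop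
  | .pt, I => I.isPt
  | .prop p, I => I.gword ∈ (lab p).matches'
  | .neg φ, I => ¬ Sat IS lab φ I
  | .conj φ ψ, I => Sat IS lab φ I ∧ Sat IS lab ψ I
  | .know i φ, I => ∀ I', IS.simI i I' I → Sat IS lab φ I'
  | .common Γ φ, I => ∀ I', IS.simC Γ I' I → Sat IS lab φ I'
  | .dia X φ, I => ∃ I', IS.hsRel X I I' ∧ Sat IS lab φ I'

end ISRL

/-- The `AB̄N` fragment of EHS⁺: all modalities are among `K_i`, `C_Γ`, `⟨A⟩`, `⟨B̄⟩`, `⟨N⟩`. -/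
def IsABN {m : ℕ} {V : Type} : EHSFormula m V → Prop
  | .pt => True
  | .prop _ => True
  | .neg φ => IsABN φ
  | .conj φ ψ => IsABN φ ∧ IsABN ψ
  | .know _ φ => IsABN φ
  | .common _ φ => IsABN φ
  | .dia X φ => (X = HSMod.A ∨ X = HSMod.Bbar ∨ X = HSMod.N) ∧ IsABN φ

namespace ISRL

variable {m : ℕ} {Var : Type} {IS : ISRL m Var}

theorem gOf_concat (w : List IS.G) (g : IS.G) : IS.gOf (w ++ [g]) = g :=
  List.getLastD_concat

theorem isState_iff {w : List IS.G} :
    IS.IsState w ↔ w ≠ [] ∧ w.IsChain IS.tG ∧ w.head? = some IS.g0 :=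
  and_assoc

theorem IsState.concat_iff {w : List IS.G} (hw : IS.IsState w) (g : IS.G) :
    IS.IsState (w ++ [g]) ↔ IS.tG (IS.gOf w) g := by
  obtain ⟨hne, hc, hh⟩ := isState_iff.mp hw
  have hlast : w.getLast? = some (IS.gOf w) := by
    rw [gOf, List.getLastD_eq_getLast?, List.getLast?_eq_some_getLast hne]; rfl
  simp [isState_iff, List.isChain_append, hlast, List.head?_append_of_ne_nil _ hne, hh, hc]

variable (IS) in
def statePath : List IS.G → List IS.G → List (List IS.G)
  | w, [] => [w]
  | w, g :: gs => w :: statePath (w ++ [g]) gs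

theorem statePath_ne_nil (w gs : List IS.G) : IS.statePath w gs ≠ [] := by
  cases gs <;> simp [statePath]

theorem head?_statePath (w gs : List IS.G) : (IS.statePath w gs).head? = some w := by
  cases gs <;> simp [statePath]

theorem headD_statePath (w gs : List IS.G) : (IS.statePath w gs).headD [] = w := by
  cases gs <;> simp [statePath]

theorem map_gOf_statePath (w gs : List IS.G) :
    (IS.statePath w gs).map IS.gOf = IS.gOf w :: gs := by
  induction gs generalizing w with
  | nil => simp [statePath]
  | cons g gs ih => simp [statePath, ih, gOf_concat]

theorem isChain_step_statePath (w gs : List IS.G) : (IS.statePath w gs).IsChain IS.step := by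
  induction gs generalizing w with
  | nil => exact List.isChain_singleton w
  | cons g gs ih =>
    refine List.isChain_cons.mpr ⟨fun v hv => ?_, ih _⟩
    rw [head?_statePath, Option.mem_some_iff] at hv
    exact ⟨g, hv.symm⟩

theorem isState_of_mem_statePath {w gs : List IS.G} (hw : IS.IsState w)
    (hc : (IS.gOf w :: gs).IsChain IS.tG) : ∀ u ∈ IS.statePath w gs, IS.IsState u := by
  induction gs generalizing w with
  | nil => simpa [statePath] using hw
  | cons g gs ih =>
    obtain ⟨htG, hc⟩ := List.isChain_cons_cons.mp hc
    have hwg : IS.IsState (w ++ [g]) := (hw.concat_iff g).mpr htG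
    rw [← gOf_concat w g] at hc
    simpa [statePath, hw] using ih hwg hc

theorem isInterval_statePath {w gs : List IS.G} (hw : IS.IsState w)
    (hc : (IS.gOf w :: gs).IsChain IS.tG) : IS.IsInterval (IS.statePath w gs) :=
  ⟨statePath_ne_nil w gs, isState_of_mem_statePath hw hc, isChain_step_statePath w gs⟩

theorem statePath_append (w gs : List IS.G) (g : IS.G) (gs' : List IS.G) :
    IS.statePath w (gs ++ g :: gs') = IS.statePath w gs ++ IS.statePath (w ++ gs ++ [g]) gs' := by
  induction gs generalizing w with
  | nil => simp [statePath]
  | cons g₁ gs ih => simp [statePath, ih]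

theorem eq_statePath_of_isChain_step {l : List (List IS.G)} (hne : l ≠ [])
    (hc : l.IsChain IS.step) : l = IS.statePath (l.headD []) (l.map IS.gOf).tail := by
  induction l with
  | nil => exact absurd rfl hne
  | cons w l ih =>
    cases l with
    | nil => simp [statePath]
    | cons v l =>
      obtain ⟨⟨g, rfl⟩, hc⟩ := List.isChain_cons_cons.mp hc
      simpa [statePath, gOf_concat] using ih (List.cons_ne_nil _ _) hc

theorem isChain_tG_map_gOf {l : List (List IS.G)} (hs : ∀ u ∈ l, IS.IsState u)
    (hc : l.IsChain IS.step) : (l.map IS.gOf).IsChain IS.tG := by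
  induction l with
  | nil => exact List.isChain_nil
  | cons w l ih =>
    cases l with
    | nil => exact List.isChain_singleton _
    | cons v l =>
      obtain ⟨⟨g, rfl⟩, hc⟩ := List.isChain_cons_cons.mp hc
      have htG : IS.tG (IS.gOf w) (IS.gOf (w ++ [g])) := by
        rw [gOf_concat]; exact ((hs w (by simp)).concat_iff g).mp (hs _ (by simp))
      exact List.isChain_cons_cons.mpr
        ⟨htG, ih (fun u hu => hs u (List.mem_cons_of_mem _ hu)) hc⟩

namespace Interval

variable (I : Interval IS)

theorem seq_ne_nil : I.seq ≠ [] := I.isInterval.1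

theorem first_isState : IS.IsState I.first := by
  obtain ⟨w, l, hwl⟩ := List.exists_cons_of_ne_nil I.seq_ne_nil
  exact I.isInterval.2.1 _ (by simp [first, hwl])

theorem last_isState : IS.IsState I.last := by
  obtain ⟨w, l, hwl⟩ := List.exists_cons_of_ne_nil I.seq_ne_nil
  refine I.isInterval.2.1 _ ?_
  rw [last, hwl, List.getLastD_cons]
  exact List.getLastD_mem_cons

theorem seq_eq_statePath : I.seq = IS.statePath I.first I.gword.tail :=
  eq_statePath_of_isChain_step I.seq_ne_nil I.isInterval.2.2

theorem gword_eq_cons : I.gword = IS.gOf I.first :: I.gword.tail := by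
  conv_lhs => rw [gword, seq_eq_statePath, map_gOf_statePath]

theorem isChain_gword : I.gword.IsChain IS.tG :=
  isChain_tG_map_gOf I.isInterval.2.1 I.isInterval.2.2

theorem gOf_first_eq_headD : IS.gOf I.first = I.gword.headD (IS.gOf []) :=
  (List.headD_map (f := IS.gOf)).symm

theorem gOf_last_eq_getLastD : IS.gOf I.last = I.gword.getLastD (IS.gOf []) :=
  (List.getLastD_map (f := IS.gOf)).symm

variable {I} {I' : Interval IS}

theorem gOf_first_eq_of_gword_eq (h : I.gword = I'.gword) : IS.gOf I.first = IS.gOf I'.first := by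
  rw [gOf_first_eq_headD, gOf_first_eq_headD, h]

theorem gOf_last_eq_of_gword_eq (h : I.gword = I'.gword) : IS.gOf I.last = IS.gOf I'.last := by
  rw [gOf_last_eq_getLastD, gOf_last_eq_getLastD, h]

/-- The interval reading the same configurations as `J`, but starting from the state `w`. -/
def rebase (J : Interval IS) (w : List IS.G) (hw : IS.IsState w)
    (hg : IS.gOf w = IS.gOf J.first) : Interval IS :=
  ⟨IS.statePath w J.gword.tail, isInterval_statePath hw (hg ▸ J.gword_eq_cons ▸ J.isChain_gword)⟩

variable (J : Interval IS) {w : List IS.G} (hw : IS.IsState w) (hg : IS.gOf w = IS.gOf J.first)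

theorem rebase_first : (J.rebase w hw hg).first = w :=
  headD_statePath w _

theorem rebase_gword : (J.rebase w hw hg).gword = J.gword := by
  rw [gword_eq_cons J, ← hg]
  exact map_gOf_statePath w _

theorem exists_relA_of_gword_eq (h : I.gword = I'.gword) {J : Interval IS} (hJ : relA I J) :
    ∃ J' : Interval IS, relA I' J' ∧ J'.gword = J.gword := by
  have hg : IS.gOf I'.last = IS.gOf J.first := by rw [← gOf_last_eq_of_gword_eq h, hJ]
  exact ⟨J.rebase I'.last I'.last_isState hg, rebase_first .., rebase_gword ..⟩

theorem exists_relN_of_gword_eq (h : I.gword = I'.gword) {J : Interval IS} (hJ : relN I J) :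
    ∃ J' : Interval IS, relN I' J' ∧ J'.gword = J.gword := by
  obtain ⟨g, hJg⟩ := hJ
  have htG : IS.tG (IS.gOf I'.last) g := by
    rw [← gOf_last_eq_of_gword_eq h, ← I.last_isState.concat_iff, ← hJg]
    exact J.first_isState
  have hg : IS.gOf (I'.last ++ [g]) = IS.gOf J.first := by rw [hJg, gOf_concat, gOf_concat]
  exact ⟨J.rebase _ ((I'.last_isState.concat_iff g).mpr htG) hg, ⟨g, rebase_first ..⟩,
    rebase_gword ..⟩

theorem exists_relB_of_gword_eq (h : I.gword = I'.gword) {J : Interval IS} (hJ : relB J I) :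
    ∃ J' : Interval IS, relB J' I' ∧ J'.gword = J.gword := by
  obtain ⟨K, hK, hJI⟩ := hJ
  obtain ⟨k, K, rfl⟩ := List.exists_cons_of_ne_nil hK
  obtain ⟨w, l, hwl⟩ := List.exists_cons_of_ne_nil I.seq_ne_nil
  have hfirst : J.first = I.first := by simp [first, hJI, hwl]
  have hg : IS.gOf I'.first = IS.gOf J.first := by rw [hfirst, gOf_first_eq_of_gword_eq h]
  have htail : J.gword.tail = I'.gword.tail ++ IS.gOf k :: K.map IS.gOf := by
    rw [← h]
    simp [gword, hJI, hwl]
  refine ⟨J.rebase I'.first I'.first_isState hg, ⟨IS.statePath (I'.first ++ I'.gword.tail ++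
    [IS.gOf k]) (K.map IS.gOf), statePath_ne_nil _ _, ?_⟩, rebase_gword ..⟩
  change IS.statePath I'.first J.gword.tail = _
  rw [htail, statePath_append, ← seq_eq_statePath]

theorem exists_hsRel_of_gword_eq {X : HSMod} (hX : X = .A ∨ X = .Bbar ∨ X = .N)
    (h : I.gword = I'.gword) {J : Interval IS} (hJ : IS.hsRel X I J) :
    ∃ J' : Interval IS, IS.hsRel X I' J' ∧ J'.gword = J.gword := by
  rcases hX with rfl | rfl | rfl
  exacts [exists_relA_of_gword_eq h hJ, exists_relB_of_gword_eq h hJ, exists_relN_of_gword_eq h hJ]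

end Interval

section indistinguishability

variable {I I' : Interval IS}

theorem simI_iff_forall₂_gword (i : Fin (m + 1)) (J I : Interval IS) :
    IS.simI i J I ↔ List.Forall₂ (fun u g => IS.gOf u i = g i) J.seq I.gword := by
  rw [simI, Interval.gword, List.forall₂_map_right_iff]
  rfl

theorem simI_congr_right (h : I.gword = I'.gword) (i : Fin (m + 1)) (J : Interval IS) :
    IS.simI i J I ↔ IS.simI i J I' := by
  rw [simI_iff_forall₂_gword, simI_iff_forall₂_gword, h]

theorem simC_congr_right (h : I.gword = I'.gword) (Γ : Finset (Fin (m + 1))) (J : Interval IS) :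
    IS.simC Γ J I ↔ IS.simC Γ J I' := by
  simp only [simC, Relation.TransGen.tail'_iff, simI_congr_right h]

end indistinguishability

theorem sat_iff_of_gword_eq {W : Type} (lab : W → RegularExpression IS.G) {φ : EHSFormula m W}
    (hφ : IsABN φ) {I I' : Interval IS} (h : I.gword = I'.gword) :
    Sat IS lab φ I ↔ Sat IS lab φ I' := by
  induction φ generalizing I I' with
  | pt =>
    have hlen : I.seq.length = I'.seq.length := by
      simpa only [Interval.gword, List.length_map] using congrArg List.length h
    simp only [Sat, Interval.isPt, hlen]
  | prop => simp only [Sat, h]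
  | neg φ ih => simp only [Sat, ih hφ h]
  | conj φ ψ ihφ ihψ => simp only [Sat, ihφ hφ.1 h, ihψ hφ.2 h]
  | know => simp only [Sat, simI_congr_right h]
  | common => simp only [Sat, simC_congr_right h]
  | dia X ψ ih =>
    suffices ∀ {I I' : Interval IS}, I.gword = I'.gword →
        Sat IS lab (.dia X ψ) I → Sat IS lab (.dia X ψ) I' from ⟨this h, this h.symm⟩
    rintro I I' h ⟨J, hJ, hJψ⟩
    obtain ⟨J', hJ', hJJ'⟩ := Interval.exists_hsRel_of_gword_eq hφ.1 h hJ
    exact ⟨J', hJ', (ih hφ.2 hJJ').mpr hJψ⟩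

end ISRL

open ISRL in
/-- satisfaction of EHS⁺_{AB̄N} formulas is history-independent.  For all
intervals `I, I'` of the model with `g(I) = g(I')`: `M,I ⊨ φ` iff `M,I' ⊨ φ`. -/
theorem stmt13 {m : ℕ} {Var : Type} (IS : ISRL m Var)
    (φ : EHSFormula m Var) (hφ : IsABN φ)
    (I I' : ISRL.Interval IS) (h : I.gword = I'.gword) :
    Sat IS IS.lab φ I ↔ Sat IS IS.lab φ I' :=
  sat_iff_of_gword_eq IS.lab hφ h
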